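/- Suppose z* = (x*, y*) satisfies g_j(x*) < 0 for every j ∈ N and y*_j > 0 for every j ∈ B_a, and suppose the radius of active-set stability δ_G is finite. Then the function Δ : (0, ∞) → ℝ ∪ {+∞} has exactly one fixed point: there exists a unique t* ∈ (0, ∞) with Δ(t*) = t*. -/

import Mathlib

noncomputable section

open scoped ENNReal
open Classical Filter Topology

/-- The primal-dual space ℝⁿ × ℝᵐ with the Euclidean norm. -/
abbrev Zsp (n m : ℕ) := EuclideanSpace ℝ (Fin n ⊕ Fin m)

/-- The primal (x-) part of a primal-dual point. -/
def xPart {n m : ℕ} (z : Zsp n m) : Fin n → ℝ := fun i => z (Sum.inl i)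

/-- The dual (y-) part of a primal-dual point. -/
def yPart {n m : ℕ} (z : Zsp n m) : Fin m → ℝ := fun j => z (Sum.inr j)

/-- Convex subdifferential of `φ : ℝⁿ → ℝ` at `x`. -/
def subdiff {n : ℕ} (φ : (Fin n → ℝ) → ℝ) (x : Fin n → ℝ) : Set (Fin n → ℝ) :=
  {u | ∀ w, φ x + ∑ i, u i * (w i - x i) ≤ φ w}

/-- Normal cone to the nonnegative orthant ℝᵐ₊ at `y`. -/
def normalConePos {m : ℕ} (y : Fin m → ℝ) : Set (Fin m → ℝ) :=
  {v | ∀ w : Fin m → ℝ, (∀ j, 0 ≤ w j) → ∑ j, v j * (w j - y j) ≤ 0}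

/-- The saddle subdifferential F(z); empty unless the dual part is nonnegative. -/
def saddleF {n m : ℕ} (f : (Fin n → ℝ) → ℝ) (g : Fin m → (Fin n → ℝ) → ℝ)
    (z : Zsp n m) : Set (Zsp n m) :=
  {uv | (∀ j, 0 ≤ yPart z j) ∧
    (∃ a ∈ subdiff f (xPart z), ∃ b : Fin m → Fin n → ℝ,
        (∀ j, b j ∈ subdiff (g j) (xPart z)) ∧
        ∀ i, xPart uv i = a i + ∑ j, yPart z j * b j i) ∧
    (∃ v ∈ normalConePos (yPart z), ∀ j, yPart uv j = -(g j (xPart z)) + v j)}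

/-- The primal-dual solution set S* = {z : 0 ∈ F(z)}. -/
def Sstar {n m : ℕ} (f : (Fin n → ℝ) → ℝ) (g : Fin m → (Fin n → ℝ) → ℝ) :
    Set (Zsp n m) := {z | (0 : Zsp n m) ∈ saddleF f g z}

/-- A primal-dual point regarded as a plain vector indexed by `Fin n ⊕ Fin m`. -/
def toVec {n m : ℕ} (z : Zsp n m) : (Fin n ⊕ Fin m) → ℝ := fun i => z i

/-- The P-seminorm ‖z‖_P = √(zᵀ P z). -/
def pnorm {n m : ℕ} (P : Matrix (Fin n ⊕ Fin m) (Fin n ⊕ Fin m) ℝ) (z : Zsp n m) : ℝ :=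
  Real.sqrt (dotProduct (toVec z) (P.mulVec (toVec z)))

/-- P-distance from a point to a set. -/
def distP {n m : ℕ} (P : Matrix (Fin n ⊕ Fin m) (Fin n ⊕ Fin m) ℝ) (z : Zsp n m)
    (S : Set (Zsp n m)) : ℝ := sInf ((fun w => pnorm P (z - w)) '' S)

/-- ℝ≥0∞-valued Q-seminorm distance from the origin to a set (equal to ⊤ on ∅). -/
def edistQ {n m : ℕ} (Q : Matrix (Fin n ⊕ Fin m) (Fin n ⊕ Fin m) ℝ)
    (A : Set (Zsp n m)) : ℝ≥0∞ := ⨅ w ∈ A, ENNReal.ofReal (pnorm Q w)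

/-- Metric subregularity of the saddle subdifferential near the solution set. -/
def MetricSubregular {n m : ℕ} (f : (Fin n → ℝ) → ℝ)
    (g : Fin m → (Fin n → ℝ) → ℝ) : Prop :=
  ∀ t > (0:ℝ), ∃ α > (0:ℝ), ∀ z : Zsp n m, Metric.infDist z (Sstar f g) ≤ t →
    ENNReal.ofReal (α * Metric.infDist z (Sstar f g)) ≤
      EMetric.infEdist (0 : Zsp n m) (saddleF f g z)

/-- `l` is the largest eigenvalue of `P`. -/
def IsMaxEigen {ι : Type*} [Fintype ι] (P : Matrix ι ι ℝ) (l : ℝ) : Prop :=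
  (∃ v : ι → ℝ, v ≠ 0 ∧ P.mulVec v = l • v) ∧
  ∀ (μ : ℝ) (v : ι → ℝ), v ≠ 0 → P.mulVec v = μ • v → μ ≤ l

/-- The global metric subregularity modulus α_G over the τ-neighborhood of S*. -/
def alphaG {n m : ℕ} (f : (Fin n → ℝ) → ℝ) (g : Fin m → (Fin n → ℝ) → ℝ) (τ : ℝ) : ℝ :=
  sInf {r : ℝ | ∃ z : Zsp n m, Metric.infDist z (Sstar f g) ≤ τ ∧
    0 < Metric.infDist z (Sstar f g) ∧ (saddleF f g z).Nonempty ∧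
    r = Metric.infDist (0 : Zsp n m) (saddleF f g z) / Metric.infDist z (Sstar f g)}

/-- The optimal primal Lipschitz modulus L̄ˣ_j(t) on the P-ball of radius t around z*. -/
def Lxbar {n m : ℕ} (g : Fin m → (Fin n → ℝ) → ℝ)
    (P : Matrix (Fin n ⊕ Fin m) (Fin n ⊕ Fin m) ℝ) (zstar : Zsp n m)
    (j : Fin m) (t : ℝ) : ℝ :=
  sSup {r : ℝ | ∃ w : Zsp n m, 0 < pnorm P (w - zstar) ∧ pnorm P (w - zstar) ≤ t ∧
    r = max (g j (xPart w) - g j (xPart zstar)) 0 / pnorm P (w - zstar)}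

/-- The optimal dual Lipschitz modulus L̄ʸ_j(t) on the P-ball of radius t around z*. -/
def Lybar {n m : ℕ} (P : Matrix (Fin n ⊕ Fin m) (Fin n ⊕ Fin m) ℝ) (zstar : Zsp n m)
    (j : Fin m) (t : ℝ) : ℝ :=
  sSup {r : ℝ | ∃ w : Zsp n m, 0 < pnorm P (w - zstar) ∧ pnorm P (w - zstar) ≤ t ∧
    r = max (yPart zstar j - yPart w j) 0 / pnorm P (w - zstar)}

/-- The set of radii of active-set stability around z*. -/
def stabSet {n m : ℕ} (g : Fin m → (Fin n → ℝ) → ℝ)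
    (P : Matrix (Fin n ⊕ Fin m) (Fin n ⊕ Fin m) ℝ) (zstar : Zsp n m) : Set ℝ :=
  {t : ℝ | 0 < t ∧ ∀ w : Zsp n m, pnorm P (w - zstar) < t →
    (∀ j, g j (xPart zstar) < 0 → g j (xPart w) < 0) ∧
    (∀ j, g j (xPart zstar) = 0 → 0 < yPart zstar j → 0 < yPart w j)}

/-- The radius of active-set stability δ. -/
def deltaG {n m : ℕ} (g : Fin m → (Fin n → ℝ) → ℝ)
    (P : Matrix (Fin n ⊕ Fin m) (Fin n ⊕ Fin m) ℝ) (zstar : Zsp n m) : ℝ :=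
  sSup (stabSet g P zstar)

/-- The identifiable set M associated with the limit solution z*. -/
def Mset {n m : ℕ} (g : Fin m → (Fin n → ℝ) → ℝ) (zstar : Zsp n m) :
    Set (Zsp n m) :=
  {w | (∀ j, 0 ≤ yPart w j) ∧
    (∀ j, g j (xPart zstar) < 0 → g j (xPart w) < 0 ∧ yPart w j = 0) ∧
    (∀ j, g j (xPart zstar) = 0 → 0 < yPart zstar j → 0 < yPart w j)}

/-- The dual function h(y) = inf_x (f(x) + ⟨y, G(x)⟩), with values in EReal. -/
def hdualFn {n m : ℕ} (f : (Fin n → ℝ) → ℝ) (g : Fin m → (Fin n → ℝ) → ℝ)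
    (y : Fin m → ℝ) : EReal :=
  ⨅ x : Fin n → ℝ, ((f x + ∑ j, y j * g j x : ℝ) : EReal)

/-- The solution set S*_L of the reduced system (only constraints indexed by B). -/
def SstarL {n m : ℕ} (f : (Fin n → ℝ) → ℝ) (g : Fin m → (Fin n → ℝ) → ℝ)
    (zstar : Zsp n m) : Set (Zsp n m) :=
  {z | ((f (xPart z) : ℝ) : EReal) ≤ hdualFn f g (yPart z) ∧
    (∀ j, g j (xPart zstar) = 0 → g j (xPart z) ≤ 0) ∧
    ∀ j, 0 ≤ yPart z j}

/-- The local metric subregularity modulus α_L. -/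
def alphaL {n m : ℕ} (f : (Fin n → ℝ) → ℝ) (g : Fin m → (Fin n → ℝ) → ℝ)
    (zstar : Zsp n m) (τ : ℝ) : ℝ :=
  sInf {r : ℝ | ∃ z : Zsp n m, Metric.infDist z (Sstar f g) ≤ τ ∧
    0 < Metric.infDist z (SstarL f g zstar) ∧ (saddleF f g z).Nonempty ∧
    r = Metric.infDist (0 : Zsp n m) (saddleF f g z) /
      Metric.infDist z (SstarL f g zstar)}

/-- The restricted metric subregularity modulus α_M over M ∩ B_P(z*, δ/2). -/
def alphaM {n m : ℕ} (f : (Fin n → ℝ) → ℝ) (g : Fin m → (Fin n → ℝ) → ℝ)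
    (P : Matrix (Fin n ⊕ Fin m) (Fin n ⊕ Fin m) ℝ) (zstar : Zsp n m)
    (τ δ : ℝ) : ℝ :=
  sInf {r : ℝ | ∃ z : Zsp n m, Metric.infDist z (Sstar f g) ≤ τ ∧
    pnorm P (z - zstar) < δ / 2 ∧ z ∈ Mset g zstar ∧
    0 < Metric.infDist z (Sstar f g) ∧ (saddleF f g z).Nonempty ∧
    r = Metric.infDist (0 : Zsp n m) (saddleF f g z) /
      Metric.infDist z (Sstar f g)}

/-- The function Δ, with values in ℝ≥0∞ (conventions: a/0 = ∞ for a > 0, inf ∅ = ∞). -/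
def DeltaFn {n m : ℕ} (g : Fin m → (Fin n → ℝ) → ℝ)
    (P : Matrix (Fin n ⊕ Fin m) (Fin n ⊕ Fin m) ℝ) (zstar : Zsp n m)
    (t : ℝ) : ℝ≥0∞ :=
  min
    (⨅ j ∈ {j : Fin m | g j (xPart zstar) < 0},
      ENNReal.ofReal (-(g j (xPart zstar))) / ENNReal.ofReal (Lxbar g P zstar j t))
    (⨅ j ∈ {j : Fin m | g j (xPart zstar) = 0 ∧ 0 < yPart zstar j},
      ENNReal.ofReal (yPart zstar j) / ENNReal.ofReal (Lybar P zstar j t))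

/-! The two kinds of conditions defining `stabSet` are `ψ_i(w) < 0` for finitely many convex
functions `ψ_i`, with slack `a_i = -ψ_i(z*) > 0`. Let `φ_i(d) = max (ψ_i(z* + d) - ψ_i(z*)) 0`, a
nonnegative convex function vanishing at `0`, and `L_i(t)` its best slope `φ_i(d) / ‖d‖_P` over the
`P`-ball of radius `t`; then `Δ(t) = t` says exactly that `t · L_i(t) ≤ a_i` for all `i`, with
equality for some `i`. By convexity `L_i` is nondecreasing and `t · L_i(t)` is the supremum of `φ_i`
over the ball, which is continuous in `t`. Hence the radii with `t · L_i(t) ≤ a_i` for all `i` form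
an interval `(0, δ]`, bounded because its members are radii of active-set stability; its endpoint
`δ` is a fixed point, and the monotonicity of `L_i` rules out a second one. -/

open Set

section PNorm

variable {n m : ℕ} {P : Matrix (Fin n ⊕ Fin m) (Fin n ⊕ Fin m) ℝ}

lemma continuous_toVec : Continuous (toVec : Zsp n m → _) :=
  PiLp.continuous_ofLp 2 _

lemma toVec_injective : Function.Injective (toVec : Zsp n m → _) :=
  WithLp.ofLp_injective 2

lemma pnorm_nonneg (z : Zsp n m) : 0 ≤ pnorm P z := Real.sqrt_nonneg _

lemma pnorm_smul (s : ℝ) (z : Zsp n m) : pnorm P (s • z) = |s| * pnorm P z := by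
  have : toVec (s • z) = s • toVec z := rfl
  rw [pnorm, pnorm, this, Matrix.mulVec_smul, smul_dotProduct, dotProduct_smul, smul_eq_mul,
    smul_eq_mul, ← mul_assoc, ← sq, Real.sqrt_mul (sq_nonneg s), Real.sqrt_sq_eq_abs]

lemma pnorm_zero : pnorm P (0 : Zsp n m) = 0 := by
  simpa using pnorm_smul (P := P) 0 (0 : Zsp n m)

lemma pnorm_pos (hP : P.PosDef) {z : Zsp n m} (hz : z ≠ 0) : 0 < pnorm P z :=
  Real.sqrt_pos.2 <| hP.dotProduct_mulVec_pos fun h => hz (toVec_injective h)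

lemma pnorm_eq_zero_iff (hP : P.PosDef) {z : Zsp n m} : pnorm P z = 0 ↔ z = 0 :=
  ⟨fun h => by_contra fun hz => (pnorm_pos hP hz).ne' h, fun h => h ▸ pnorm_zero⟩

lemma continuous_pnorm (P : Matrix (Fin n ⊕ Fin m) (Fin n ⊕ Fin m) ℝ) :
    Continuous (pnorm P) :=
  Real.continuous_sqrt.comp <|
    continuous_toVec.dotProduct (continuous_const.matrix_mulVec continuous_toVec)

lemma isCompact_pnorm_le (hP : P.PosDef) (t : ℝ) : IsCompact {z : Zsp n m | pnorm P z ≤ t} := by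
  obtain ⟨c, hc, hcle⟩ := (isCompact_sphere (0 : Zsp n m) 1).exists_forall_le'
    (continuous_pnorm P).continuousOn fun u hu =>
      pnorm_pos hP (ne_zero_of_mem_sphere one_ne_zero ⟨u, hu⟩)
  refine (isCompact_closedBall (0 : Zsp n m) (t / c)).of_isClosed_subset
    (isClosed_le (continuous_pnorm P) continuous_const) fun z hz => ?_
  rw [mem_closedBall_zero_iff, le_div_iff₀ hc]
  rcases eq_or_ne z 0 with rfl | hz0
  · simpa [pnorm_zero] using hz
  have hzpos : 0 < ‖z‖ := norm_pos_iff.2 hz0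
  have h := hcle (‖z‖⁻¹ • z) (by simp [norm_smul, hzpos.ne'])
  rw [pnorm_smul, abs_of_pos (inv_pos.2 hzpos), le_inv_mul_iff₀ hzpos] at h
  exact h.trans hz

end PNorm

lemma ConvexOn.continuous_of_univ {E : Type*} [NormedAddCommGroup E] [NormedSpace ℝ E]
    [FiniteDimensional ℝ E] {φ : E → ℝ} (hφ : ConvexOn ℝ univ φ) : Continuous φ :=
  continuousOn_univ.1 (hφ.continuousOn isOpen_univ)

lemma ConvexOn.map_smul_le_mul {E : Type*} [AddCommGroup E] [Module ℝ E] {φ : E → ℝ}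
    (hφ : ConvexOn ℝ univ φ) (hφ0 : φ 0 = 0) {s : ℝ} (hs0 : 0 ≤ s) (hs1 : s ≤ 1) (d : E) :
    φ (s • d) ≤ s * φ d := by
  simpa [hφ0] using hφ.2 (mem_univ d) (mem_univ 0) hs0 (sub_nonneg.2 hs1) (add_sub_cancel s 1)

section BallSlope

variable {n m : ℕ} {P : Matrix (Fin n ⊕ Fin m) (Fin n ⊕ Fin m) ℝ} {φ : Zsp n m → ℝ}

/-- Parametrised by the unit ball so that continuity in `t` is an instance of
`IsCompact.continuous_sSup`. -/
def ballSup (P : Matrix (Fin n ⊕ Fin m) (Fin n ⊕ Fin m) ℝ) (φ : Zsp n m → ℝ) (t : ℝ) : ℝ :=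
  sSup ((fun u => φ (t • u)) '' {u | pnorm P u ≤ 1})

def ballSlope (P : Matrix (Fin n ⊕ Fin m) (Fin n ⊕ Fin m) ℝ) (φ : Zsp n m → ℝ) (t : ℝ) : ℝ :=
  sSup {r | ∃ d, 0 < pnorm P d ∧ pnorm P d ≤ t ∧ r = φ d / pnorm P d}

lemma ballSlope_nonneg (hφnn : ∀ d, 0 ≤ φ d) (t : ℝ) : 0 ≤ ballSlope P φ t :=
  Real.sSup_nonneg <| by
    rintro r ⟨d, -, -, rfl⟩
    exact div_nonneg (hφnn d) (pnorm_nonneg d)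

variable (hP : P.PosDef) (hφ : ConvexOn ℝ univ φ)
include hP hφ

lemma continuous_ballSup : Continuous (ballSup P φ) :=
  (isCompact_pnorm_le hP 1).continuous_sSup <|
    hφ.continuous_of_univ.comp (continuous_fst.smul continuous_snd)

lemma le_ballSup {u : Zsp n m} (hu : pnorm P u ≤ 1) (t : ℝ) : φ (t • u) ≤ ballSup P φ t :=
  le_csSup (((isCompact_pnorm_le hP 1).image
    (hφ.continuous_of_univ.comp (continuous_const_smul t))).bddAbove) ⟨u, hu, rfl⟩

variable (hφ0 : φ 0 = 0)
include hφ0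

lemma ballSup_nonneg (t : ℝ) : 0 ≤ ballSup P φ t := by
  simpa [hφ0] using le_ballSup hP hφ (u := 0) (by simp [pnorm_zero]) t

lemma div_pnorm_le_ballSup_div {d : Zsp n m} (hd : 0 < pnorm P d) {t : ℝ} (hdt : pnorm P d ≤ t) :
    φ d / pnorm P d ≤ ballSup P φ t / t := by
  set ν := pnorm P d
  have ht : 0 < t := hd.trans_le hdt
  have hu : pnorm P (ν⁻¹ • d) = 1 := by
    rw [pnorm_smul, abs_of_pos (inv_pos.2 hd), inv_mul_cancel₀ hd.ne']
  have hd_eq : d = (ν / t) • (t • ν⁻¹ • d) := by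
    rw [smul_smul, smul_smul, div_mul_cancel₀ _ ht.ne', mul_inv_cancel₀ hd.ne', one_smul]
  calc φ d / ν ≤ ν / t * φ (t • ν⁻¹ • d) / ν := by
        gcongr
        conv_lhs => rw [hd_eq]
        exact hφ.map_smul_le_mul hφ0 (by positivity) ((div_le_one ht).2 hdt) _
    _ ≤ ν / t * ballSup P φ t / ν := by gcongr; exact le_ballSup hP hφ hu.le t
    _ = ballSup P φ t / t := by field_simp

lemma div_pnorm_le_ballSlope {d : Zsp n m} (hd : 0 < pnorm P d) {t : ℝ} (hdt : pnorm P d ≤ t) :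
    φ d / pnorm P d ≤ ballSlope P φ t := by
  refine le_csSup ⟨ballSup P φ t / t, ?_⟩ ⟨d, hd, hdt, rfl⟩
  rintro r ⟨e, he, het, rfl⟩
  exact div_pnorm_le_ballSup_div hP hφ hφ0 he het

lemma map_le_pnorm_mul_ballSlope {d : Zsp n m} {t : ℝ} (hdt : pnorm P d ≤ t) :
    φ d ≤ pnorm P d * ballSlope P φ t := by
  rcases (pnorm_nonneg d).eq_or_lt with h | h
  · rw [(pnorm_eq_zero_iff hP).1 h.symm, hφ0, pnorm_zero, zero_mul]
  · rw [← div_le_iff₀' h]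
    exact div_pnorm_le_ballSlope hP hφ hφ0 h hdt

lemma monotone_ballSlope (hφnn : ∀ d, 0 ≤ φ d) : Monotone (ballSlope P φ) := by
  intro _ t₂ h
  refine Real.sSup_le ?_ (ballSlope_nonneg hφnn t₂)
  rintro r ⟨d, hd, hdt, rfl⟩
  exact div_pnorm_le_ballSlope hP hφ hφ0 hd (hdt.trans h)

lemma mul_ballSlope_eq_ballSup (hφnn : ∀ d, 0 ≤ φ d) {t : ℝ} (ht : 0 < t) :
    t * ballSlope P φ t = ballSup P φ t := by
  refine le_antisymm ?_ (csSup_le ⟨_, 0, by simp [pnorm_zero], rfl⟩ ?_)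
  · rw [← le_div_iff₀' ht]
    refine Real.sSup_le ?_ (div_nonneg (ballSup_nonneg hP hφ hφ0 t) ht.le)
    rintro r ⟨d, hd, hdt, rfl⟩
    exact div_pnorm_le_ballSup_div hP hφ hφ0 hd hdt
  · rintro _ ⟨u, hu, rfl⟩
    have htu : pnorm P (t • u) ≤ t := by
      rw [pnorm_smul, abs_of_pos ht]
      exact mul_le_of_le_one_right ht.le hu
    calc φ (t • u) ≤ pnorm P (t • u) * ballSlope P φ t :=
          map_le_pnorm_mul_ballSlope hP hφ hφ0 htu
      _ ≤ t * ballSlope P φ t := by gcongr; exact ballSlope_nonneg hφnn t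

lemma continuousOn_mul_ballSlope (hφnn : ∀ d, 0 ≤ φ d) :
    ContinuousOn (fun t => t * ballSlope P φ t) (Ioi 0) :=
  (continuous_ballSup hP hφ).continuousOn.congr fun _ ht =>
    mul_ballSlope_eq_ballSup hP hφ hφ0 hφnn ht

lemma map_lt_of_mul_ballSlope_le (hφnn : ∀ d, 0 ≤ φ d) {a t : ℝ} (ha : 0 < a)
    (hta : t * ballSlope P φ t ≤ a) {d : Zsp n m} (hd : pnorm P d < t) : φ d < a := by
  refine (map_le_pnorm_mul_ballSlope hP hφ hφ0 hd.le).trans_lt ?_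
  rcases (ballSlope_nonneg hφnn t).eq_or_lt with h | h
  · rwa [← h, mul_zero]
  · exact (mul_lt_mul_of_pos_right hd h).trans_le hta

end BallSlope

section CriticalRadius

variable {ι : Type*} {s : Set ι} {a : ι → ℝ} {L : ι → ℝ → ℝ}

def IsCriticalRadius (s : Set ι) (a : ι → ℝ) (L : ι → ℝ → ℝ) (t : ℝ) : Prop :=
  0 < t ∧ (∀ i ∈ s, t * L i t ≤ a i) ∧ ∃ i ∈ s, a i ≤ t * L i t

lemma IsCriticalRadius.le (ha : ∀ i ∈ s, 0 < a i) (hmono : ∀ i ∈ s, MonotoneOn (L i) (Ioi 0))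
    {t₁ t₂ : ℝ} (h₁ : IsCriticalRadius s a L t₁) (h₂ : IsCriticalRadius s a L t₂) : t₁ ≤ t₂ := by
  by_contra! h
  obtain ⟨i, hi, hai⟩ := h₂.2.2
  have hL₂ : 0 < L i t₂ := pos_of_mul_pos_right ((ha i hi).trans_le hai) h₂.1.le
  have hL : L i t₂ ≤ L i t₁ := hmono i hi h₂.1 (h₂.1.trans h) h.le
  linarith [h₁.2.1 i hi, mul_le_mul_of_nonneg_left hL h₂.1.le,
    mul_lt_mul_of_pos_right h (hL₂.trans_le hL)]

lemma exists_isCriticalRadius (hs : s.Finite) (ha : ∀ i ∈ s, 0 < a i)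
    (hmono : ∀ i ∈ s, MonotoneOn (L i) (Ioi 0))
    (hcont : ∀ i ∈ s, ContinuousOn (fun t => t * L i t) (Ioi 0))
    (hbdd : BddAbove {t | 0 < t ∧ ∀ i ∈ s, t * L i t ≤ a i}) :
    ∃ t, IsCriticalRadius s a L t := by
  set S := {t | 0 < t ∧ ∀ i ∈ s, t * L i t ≤ a i}
  have hdown : ∀ {t t'}, t ∈ S → 0 < t' → t' ≤ t → t' ∈ S := by
    intro t t' ⟨ht, hS⟩ ht' h
    refine ⟨ht', fun i hi => ?_⟩
    have hL := hmono i hi ht' ht h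
    rcases le_or_gt 0 (L i t) with h0 | h0 <;> nlinarith [hS i hi, ha i hi]
  have hsmall : ∀ i ∈ s, ∀ᶠ t in 𝓝[>] 0, t * L i t ≤ a i := by
    intro i hi
    have hlin : ∀ᶠ t in 𝓝[>] (0 : ℝ), t * L i 1 < a i :=
      nhdsWithin_le_nhds <| (continuous_id.mul continuous_const).continuousAt.eventually_lt
        continuousAt_const (by simpa using ha i hi)
    filter_upwards [hlin, Ioc_mem_nhdsGT one_pos] with t hlt ⟨ht, ht1⟩
    nlinarith [hmono i hi ht (mem_Ioi.2 one_pos) ht1]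
  obtain ⟨t₀, ht₀S, ht₀⟩ := ((hs.eventually_all.2 hsmall).and self_mem_nhdsWithin).exists
  have hne : S.Nonempty := ⟨t₀, ht₀, ht₀S⟩
  set δ := sSup S
  have hδ : 0 < δ := ht₀.trans_le (le_csSup hbdd ⟨ht₀, ht₀S⟩)
  have hbelow : ∀ t ∈ Ioo 0 δ, t ∈ S := fun t ⟨ht, htδ⟩ =>
    let ⟨t', ht'S, htt'⟩ := exists_lt_of_lt_csSup hne htδ
    hdown ht'S ht htt'.le
  have hcontδ : ∀ i ∈ s, ContinuousAt (fun t => t * L i t) δ := fun i hi =>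
    (hcont i hi).continuousAt (Ioi_mem_nhds hδ)
  refine ⟨δ, hδ, fun i hi => ?_, ?_⟩
  · refine le_of_tendsto ((hcontδ i hi).tendsto.mono_left (nhdsWithin_le_nhds (s := Iio δ))) ?_
    filter_upwards [Ioo_mem_nhdsLT hδ] with t ht using (hbelow t ht).2 i hi
  · by_contra! hlt
    have hev : ∀ᶠ t in 𝓝[>] δ, ∀ i ∈ s, t * L i t < a i := nhdsWithin_le_nhds <|
      hs.eventually_all.2 fun i hi => (hcontδ i hi).eventually_lt continuousAt_const (hlt i hi)
    obtain ⟨t, hts, hδt⟩ := (hev.and self_mem_nhdsWithin).exists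
    exact (le_csSup hbdd ⟨hδ.trans hδt, fun i hi => (hts i hi).le⟩).not_gt hδt

theorem existsUnique_isCriticalRadius (hs : s.Finite) (ha : ∀ i ∈ s, 0 < a i)
    (hmono : ∀ i ∈ s, MonotoneOn (L i) (Ioi 0))
    (hcont : ∀ i ∈ s, ContinuousOn (fun t => t * L i t) (Ioi 0))
    (hbdd : BddAbove {t | 0 < t ∧ ∀ i ∈ s, t * L i t ≤ a i}) :
    ∃! t, IsCriticalRadius s a L t :=
  let ⟨t, ht⟩ := exists_isCriticalRadius hs ha hmono hcont hbdd
  ⟨t, ht, fun _ ht' => le_antisymm (ht'.le ha hmono ht) (ht.le ha hmono ht')⟩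

end CriticalRadius

lemma biInf_ofReal_div_ofReal_eq_ofReal_iff {ι : Type*} {s : Set ι} (hs : s.Finite)
    {a L : ι → ℝ} (ha : ∀ i ∈ s, 0 < a i) (hL : ∀ i ∈ s, 0 ≤ L i) {t : ℝ} (ht : 0 < t) :
    ⨅ i ∈ s, ENNReal.ofReal (a i) / ENNReal.ofReal (L i) = ENNReal.ofReal t ↔
      (∀ i ∈ s, t * L i ≤ a i) ∧ ∃ i ∈ s, a i ≤ t * L i := by
  have hge : ∀ i ∈ s, ENNReal.ofReal t ≤ ENNReal.ofReal (a i) / ENNReal.ofReal (L i) ↔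
      t * L i ≤ a i := fun i hi => by
    rw [ENNReal.le_div_iff_mul_le (Or.inr (by simpa using ha i hi))
      (Or.inr ENNReal.ofReal_ne_top), ← ENNReal.ofReal_mul ht.le,
      ENNReal.ofReal_le_ofReal_iff (ha i hi).le]
  have hle : ∀ i ∈ s, ENNReal.ofReal (a i) / ENNReal.ofReal (L i) ≤ ENNReal.ofReal t ↔
      a i ≤ t * L i := fun i hi => by
    rw [ENNReal.div_le_iff_le_mul (Or.inr ENNReal.ofReal_ne_top) (Or.inl ENNReal.ofReal_ne_top),
      ← ENNReal.ofReal_mul ht.le, ENNReal.ofReal_le_ofReal_iff (mul_nonneg ht.le (hL i hi))]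
  rw [le_antisymm_iff, and_comm, le_iInf₂_iff]
  refine and_congr (forall₂_congr hge) ⟨fun h => ?_, fun ⟨i, hi, hai⟩ => ?_⟩
  · rcases s.eq_empty_or_nonempty with rfl | ⟨i, hi⟩
    · simp at h
    obtain ⟨j, hj, hjeq⟩ :=
      hs.ciInf_mem_image (fun i => ENNReal.ofReal (a i) / ENNReal.ofReal (L i))
        ⟨i, hi, by rw [sInf_empty]; exact le_top⟩
    exact ⟨j, hj, (hle j hj).1 (hjeq.trans_le h)⟩
  · exact (iInf₂_le i hi).trans ((hle i hi).2 hai)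

section Excess

variable {E : Type*} [AddCommGroup E] {ψ : E → ℝ}

def excess (ψ : E → ℝ) (z d : E) : ℝ := max (ψ (z + d) - ψ z) 0

lemma excess_zero (z : E) : excess ψ z 0 = 0 := by simp [excess]

lemma excess_nonneg (z d : E) : 0 ≤ excess ψ z d := le_max_right _ _

lemma ConvexOn.excess [Module ℝ E] (hψ : ConvexOn ℝ univ ψ) (z : E) :
    ConvexOn ℝ univ (excess ψ z) :=
  ((hψ.translate_right z).add_const (-ψ z)).sup (convexOn_const 0 convex_univ)

end Excess

lemma sSup_ratio_eq_ballSlope_excess {n m : ℕ} (P : Matrix (Fin n ⊕ Fin m) (Fin n ⊕ Fin m) ℝ)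
    (ψ : Zsp n m → ℝ) (z : Zsp n m) (t : ℝ) :
    sSup {r | ∃ w, 0 < pnorm P (w - z) ∧ pnorm P (w - z) ≤ t ∧
      r = max (ψ w - ψ z) 0 / pnorm P (w - z)} = ballSlope P (excess ψ z) t := by
  congr 1
  ext r
  constructor
  · rintro ⟨w, hw, hwt, rfl⟩
    exact ⟨w - z, hw, hwt, by rw [excess, add_sub_cancel]⟩
  · rintro ⟨d, hd, hdt, rfl⟩
    exact ⟨z + d, by simpa using hd, by simpa using hdt, by rw [excess, add_sub_cancel_left]⟩

section Constraints

variable {n m : ℕ} {g : Fin m → (Fin n → ℝ) → ℝ} {P : Matrix (Fin n ⊕ Fin m) (Fin n ⊕ Fin m) ℝ}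
  {zstar : Zsp n m}

/-- Both kinds of conditions in `stabSet` read `constraintFn g i w < 0`: `g j (xPart w) < 0`
on the left copy of `Fin m` (indices in `N`) and `0 < yPart w j` on the right copy (indices in
`B_a`, collected with `N` in `stabIdx`). -/
def constraintFn (g : Fin m → (Fin n → ℝ) → ℝ) : Fin m ⊕ Fin m → Zsp n m → ℝ
  | .inl j, w => g j (xPart w)
  | .inr j, w => -yPart w j

def stabIdx (g : Fin m → (Fin n → ℝ) → ℝ) (zstar : Zsp n m) : Set (Fin m ⊕ Fin m) :=
  {i | Sum.elim (fun j => g j (xPart zstar) < 0)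
    (fun j => g j (xPart zstar) = 0 ∧ 0 < yPart zstar j) i}

lemma convexOn_constraintFn (hg : ∀ j, ConvexOn ℝ univ (g j)) :
    ∀ i, ConvexOn ℝ univ (constraintFn g i : Zsp n m → ℝ)
  | .inl j => (hg j).comp_linearMap
      { toFun := xPart, map_add' := fun _ _ => rfl, map_smul' := fun _ _ => rfl }
  | .inr j => (-(EuclideanSpace.proj (Sum.inr j) : Zsp n m →L[ℝ] ℝ)).toLinearMap.convexOn
      convex_univ

lemma constraintFn_neg_of_mem_stabIdx : ∀ {i}, i ∈ stabIdx g zstar → constraintFn g i zstar < 0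
  | .inl _, h => h
  | .inr _, h => neg_neg_of_pos h.2

lemma DeltaFn_eq_biInf (t : ℝ) :
    DeltaFn g P zstar t = ⨅ i ∈ stabIdx g zstar, ENNReal.ofReal (-constraintFn g i zstar) /
      ENNReal.ofReal (ballSlope P (excess (constraintFn g i) zstar) t) := by
  rw [iInf_sum, DeltaFn]
  congr 1
  · simp only [Lxbar, sSup_ratio_eq_ballSlope_excess]
    rfl
  · simp only [Lybar, ← sSup_ratio_eq_ballSlope_excess, constraintFn, neg_sub_neg, neg_neg]
    rfl

lemma mem_stabSet_of_mul_ballSlope_le (hP : P.PosDef) (hg : ∀ j, ConvexOn ℝ univ (g j))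
    {t : ℝ} (ht : 0 < t) (h : ∀ i ∈ stabIdx g zstar,
      t * ballSlope P (excess (constraintFn g i) zstar) t ≤ -constraintFn g i zstar) :
    t ∈ stabSet g P zstar := by
  have hneg : ∀ i ∈ stabIdx g zstar, ∀ w, pnorm P (w - zstar) < t → constraintFn g i w < 0 := by
    intro i hi w hw
    have hexcess := map_lt_of_mul_ballSlope_le hP ((convexOn_constraintFn hg i).excess zstar)
      (excess_zero zstar) (excess_nonneg zstar) (neg_pos.2 (constraintFn_neg_of_mem_stabIdx hi))
      (h i hi) hw
    rw [excess, add_sub_cancel] at hexcess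
    linarith [le_max_left (constraintFn g i w - constraintFn g i zstar) 0]
  exact ⟨ht, fun w hw => ⟨fun j hj => hneg (.inl j) hj w hw,
    fun j hj hy => neg_neg_iff_pos.1 (hneg (.inr j) ⟨hj, hy⟩ w hw)⟩⟩

end Constraints

theorem stmt12_general
    (n m : ℕ)
    (g : Fin m → (Fin n → ℝ) → ℝ)
    (hg : ∀ j, ConvexOn ℝ Set.univ (g j))
    (P : Matrix (Fin n ⊕ Fin m) (Fin n ⊕ Fin m) ℝ) (hP : P.PosDef)
    (zstar : Zsp n m)
    -- δ_G is finite
    (hδfin : BddAbove (stabSet g P zstar)) :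
    ∃! t : ℝ, 0 < t ∧ DeltaFn g P zstar t = ENNReal.ofReal t := by
  set s := stabIdx g zstar
  have ha : ∀ i ∈ s, 0 < -constraintFn g i zstar := fun _ hi =>
    neg_pos.2 (constraintFn_neg_of_mem_stabIdx hi)
  have hφ : ∀ i, ConvexOn ℝ univ (excess (constraintFn g i) zstar) := fun i =>
    (convexOn_constraintFn hg i).excess zstar
  have hcrit := existsUnique_isCriticalRadius s.toFinite ha
    (fun i _ =>
      (monotone_ballSlope hP (hφ i) (excess_zero zstar) (excess_nonneg zstar)).monotoneOn _)
    (fun i _ => continuousOn_mul_ballSlope hP (hφ i) (excess_zero zstar) (excess_nonneg zstar))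
    (BddAbove.mono (fun _ ⟨ht, h⟩ => mem_stabSet_of_mul_ballSlope_le hP hg ht h) hδfin)
  refine (existsUnique_congr fun t => and_congr_right fun ht => ?_).1 hcrit
  rw [DeltaFn_eq_biInf, biInf_ofReal_div_ofReal_eq_ofReal_iff s.toFinite ha
    (fun i _ => ballSlope_nonneg (excess_nonneg zstar) t) ht]

/-- Lemma: Δ has a unique fixed point. -/
theorem stmt12
    (n m : ℕ) (hn : 0 < n) (hm : 0 < m)
    (f : (Fin n → ℝ) → ℝ) (g : Fin m → (Fin n → ℝ) → ℝ)
    (hf : ConvexOn ℝ Set.univ f) (hg : ∀ j, ConvexOn ℝ Set.univ (g j))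
    (P : Matrix (Fin n ⊕ Fin m) (Fin n ⊕ Fin m) ℝ) (hP : P.PosDef)
    (zstar : Zsp n m)
    -- δ_G is finite
    (hδfin : BddAbove (stabSet g P zstar)) :
    ∃! t : ℝ, 0 < t ∧ DeltaFn g P zstar t = ENNReal.ofReal t :=
  stmt12_general n m g hg P hP zstar hδfin
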